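/- Let h_x, h_y > 0, Δt ≥ 0, σ ∈ ℝ, and let I = [a, a + h_x] × [b, b + h_y] be a rectangle with center (x_c, y_c) = (a + h_x/2, b + h_y/2). Let u : [0,Δt] × I → ℝ be such that u(τ,·,·) is integrable on I for each τ, and such that for each test function φ ∈ {1, x − x_c, y − y_c} the map τ ↦ ∬_I u(τ,x,y)·φ(x,y) dx dy is differentiable on [0,Δt] and satisfies d/dτ ∬_I u(τ,x,y)·φ(x,y) dx dy + σ·∬_I (u(τ,x,y) − ū(τ))·φ(x,y) dx dy = 0, where ū(τ) = (1/(h_x h_y))·∬_I u(τ,x,y) dx dy. Then (i) ∬_I u(Δt,x,y) dx dy = ∬_I u(0,x,y) dx dy, (ii) ∬_I u(Δt,x,y)·(x − x_c) dx dy = exp(−σ·Δt)·∬_I u(0,x,y)·(x − x_c) dx dy, and (iii) ∬_I u(Δt,x,y)·(y − y_c) dx dy = exp(−σ·Δt)·∬_I u(0,x,y)·(y − y_c) dx dy. -/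

import Mathlib

open MeasureTheory Set

/-- **Exact solver of the 2D OE damping procedure** (Theorem 2.10 of the paper).
Let `I = [a, a+h_x] × [b, b+h_y]` with center `(x_c, y_c) = (a + h_x/2, b + h_y/2)`.
If `u(τ,·)` is integrable on `I` for each `τ ∈ [0, Δt]`, and for each linear test
function `φ ∈ {1, x - x_c, y - y_c}` the moment `τ ↦ ∬_I u(τ,x,y) φ(x,y) dx dy` is
differentiable on `[0, Δt]` and satisfies the damping equation
`d/dτ ∬_I u φ + σ ∬_I (u - ū) φ = 0` where `ū(τ) = (1/(h_x h_y)) ∬_I u dx dy`,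
then the cell average is preserved and both first-order moments (in `x` and in `y`)
are multiplied by the same exponential damping factor `exp(-σ Δt)`. -/
lemma decay_lemma (Δt σ : ℝ) (hΔt : 0 ≤ Δt) (M : ℝ → ℝ)
    (hM : ∀ τ ∈ Set.Icc (0:ℝ) Δt, HasDerivWithinAt M (-(σ * M τ)) (Set.Icc 0 Δt) τ) :
    M Δt = Real.exp (-(σ * Δt)) * M 0 := by
  rcases hΔt.eq_or_lt with h | h
  · simp [← h]
  · set g : ℝ → ℝ := fun τ => Real.exp (σ * τ) * M τ with hg
    have hgd : ∀ τ ∈ Set.Icc (0:ℝ) Δt, HasDerivWithinAt g 0 (Set.Icc 0 Δt) τ := by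
      intro τ hτ
      have he : HasDerivAt (fun τ => Real.exp (σ * τ)) (Real.exp (σ * τ) * σ) τ := by
        simpa using ((hasDerivAt_id τ).const_mul σ).exp
      have := he.hasDerivWithinAt.mul (hM τ hτ)
      rw [show Real.exp (σ * τ) * σ * M τ + Real.exp (σ * τ) * -(σ * M τ) = 0 by ring] at this
      exact this
    have hud : UniqueDiffOn ℝ (Set.Icc (0:ℝ) Δt) := uniqueDiffOn_Icc h
    have hconst : g Δt = g 0 := by
      apply (convex_Icc (0:ℝ) Δt).is_const_of_fderivWithin_eq_zero
        (fun τ hτ => ((hgd τ hτ).differentiableWithinAt))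
        (fun τ hτ => ?_) (Set.right_mem_Icc.2 hΔt) (Set.left_mem_Icc.2 hΔt)
      have := (hgd τ hτ).hasFDerivWithinAt.fderivWithin (hud τ hτ)
      rw [this]; ext; simp
    have : Real.exp (σ * Δt) * M Δt = M 0 := by simpa [hg] using hconst
    have hne : Real.exp (σ * Δt) ≠ 0 := (Real.exp_pos _).ne'
    rw [Real.exp_neg, ← this]
    field_simp

lemma centered_integral_zero (a h : ℝ) (hh : 0 ≤ h) :
    (∫ x in Set.Icc a (a + h), (x - (a + h / 2))) = 0 := by
  rw [MeasureTheory.integral_Icc_eq_integral_Ioc,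
    ← intervalIntegral.integral_of_le (by linarith : a ≤ a + h)]
  have h1 : IntervalIntegrable (fun x : ℝ => x) volume a (a + h) :=
    (continuous_id).intervalIntegrable _ _
  have h2 : IntervalIntegrable (fun _ : ℝ => (a + h / 2)) volume a (a + h) :=
    intervalIntegrable_const
  rw [show (fun x : ℝ => x - (a + h / 2)) = fun x : ℝ => x - (a + h / 2) from rfl]
  rw [intervalIntegral.integral_sub h1 h2, integral_id, intervalIntegral.integral_const,
    smul_eq_mul]
  ring

theorem oe_damping_exact_solver_2d
    (hx hy Δt σ a b : ℝ) (hhx : 0 < hx) (hhy : 0 < hy) (hΔt : 0 ≤ Δt)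
    (u : ℝ → ℝ × ℝ → ℝ)
    (hint : ∀ τ ∈ Set.Icc (0:ℝ) Δt,
      IntegrableOn (u τ) (Set.Icc a (a + hx) ×ˢ Set.Icc b (b + hy)))
    (hode : ∀ φ ∈ ({fun _ => (1:ℝ), fun p => p.1 - (a + hx / 2),
        fun p => p.2 - (b + hy / 2)} : Set (ℝ × ℝ → ℝ)),
      ∀ τ ∈ Set.Icc (0:ℝ) Δt,
        HasDerivWithinAt
          (fun s => ∫ p in Set.Icc a (a + hx) ×ˢ Set.Icc b (b + hy), u s p * φ p)
          (-(σ * ∫ p in Set.Icc a (a + hx) ×ˢ Set.Icc b (b + hy),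
              (u τ p - (1 / (hx * hy)) *
                ∫ q in Set.Icc a (a + hx) ×ˢ Set.Icc b (b + hy), u τ q) * φ p))
          (Set.Icc (0:ℝ) Δt) τ) :
    (∫ p in Set.Icc a (a + hx) ×ˢ Set.Icc b (b + hy), u Δt p) =
      (∫ p in Set.Icc a (a + hx) ×ˢ Set.Icc b (b + hy), u 0 p) ∧
    (∫ p in Set.Icc a (a + hx) ×ˢ Set.Icc b (b + hy), u Δt p * (p.1 - (a + hx / 2))) =
      Real.exp (-(σ * Δt)) *
        ∫ p in Set.Icc a (a + hx) ×ˢ Set.Icc b (b + hy), u 0 p * (p.1 - (a + hx / 2)) ∧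
    (∫ p in Set.Icc a (a + hx) ×ˢ Set.Icc b (b + hy), u Δt p * (p.2 - (b + hy / 2))) =
      Real.exp (-(σ * Δt)) *
        ∫ p in Set.Icc a (a + hx) ×ˢ Set.Icc b (b + hy), u 0 p * (p.2 - (b + hy / 2)) := by
  set s : Set (ℝ × ℝ) := Set.Icc a (a + hx) ×ˢ Set.Icc b (b + hy) with hs
  have hsc : IsCompact s := isCompact_Icc.prod isCompact_Icc
  have hsm : MeasurableSet s := (measurableSet_Icc.prod measurableSet_Icc)
  have hvol : (volume s).toReal = hx * hy := by
    rw [hs, Measure.volume_eq_prod ℝ ℝ, Measure.prod_prod]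
    simp [Real.volume_Icc, ENNReal.toReal_mul,
      ENNReal.toReal_ofReal hhx.le, ENNReal.toReal_ofReal hhy.le]
  have hvolfin : volume s ≠ ⊤ := hsc.measure_lt_top.ne
  -- integrals of centered coordinates vanish
  have hx0 : (∫ p in s, (p.1 - (a + hx / 2))) = 0 := by
    have h := MeasureTheory.setIntegral_prod_mul (μ := (volume : Measure ℝ))
      (ν := (volume : Measure ℝ)) (fun x => x - (a + hx / 2)) (fun _ => (1:ℝ))
      (Set.Icc a (a + hx)) (Set.Icc b (b + hy))
    simp only [mul_one] at h
    rw [hs, Measure.volume_eq_prod ℝ ℝ, h, centered_integral_zero _ _ hhx.le, zero_mul]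
  have hy0 : (∫ p in s, (p.2 - (b + hy / 2))) = 0 := by
    have h := MeasureTheory.setIntegral_prod_mul (μ := (volume : Measure ℝ))
      (ν := (volume : Measure ℝ)) (fun _ => (1:ℝ)) (fun y => y - (b + hy / 2))
      (Set.Icc a (a + hx)) (Set.Icc b (b + hy))
    simp only [one_mul] at h
    rw [hs, Measure.volume_eq_prod ℝ ℝ, h, centered_integral_zero _ _ hhy.le, mul_zero]
  -- generic moment lemma for a continuous centered φ
  have moment : ∀ φ : ℝ × ℝ → ℝ, Continuous φ → (∫ p in s, φ p) = 0 →
      (φ ∈ ({fun _ => (1:ℝ), fun p => p.1 - (a + hx / 2),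
        fun p => p.2 - (b + hy / 2)} : Set (ℝ × ℝ → ℝ))) →
      (∫ p in s, u Δt p * φ p) = Real.exp (-(σ * Δt)) * ∫ p in s, u 0 p * φ p := by
    intro φ hφc hφ0 hφmem
    apply decay_lemma Δt σ hΔt
    intro τ hτ
    have h1 := hode φ hφmem τ hτ
    have hiu : IntegrableOn (fun p => u τ p * φ p) s :=
      (hint τ hτ).mul_continuousOn hφc.continuousOn hsc
    have hic : IntegrableOn (fun p =>
        ((1 / (hx * hy)) * ∫ q in s, u τ q) * φ p) s :=
      (continuous_const.mul hφc).continuousOn.integrableOn_compact hsc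
    have hval : (∫ p in s, (u τ p - (1 / (hx * hy)) * ∫ q in s, u τ q) * φ p)
        = ∫ p in s, u τ p * φ p := by
      have : ∀ p, (u τ p - (1 / (hx * hy)) * ∫ q in s, u τ q) * φ p
          = u τ p * φ p - ((1 / (hx * hy)) * ∫ q in s, u τ q) * φ p := by
        intro p; ring
      simp_rw [this]
      rw [MeasureTheory.integral_sub hiu hic, MeasureTheory.integral_const_mul, hφ0,
        mul_zero, sub_zero]
    rw [← hval]
    exact h1
  refine ⟨?_, ?_, ?_⟩
  · -- cell average: derivative is zero
    have h1 := hode (fun _ => (1:ℝ)) (by simp)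
    have key : ∀ τ ∈ Set.Icc (0:ℝ) Δt,
        HasDerivWithinAt (fun s' => ∫ p in s, u s' p * 1) 0 (Set.Icc 0 Δt) τ := by
      intro τ hτ
      have hz : (∫ p in s, (u τ p - (1 / (hx * hy)) * ∫ q in s, u τ q) * 1) = 0 := by
        simp only [mul_one]
        rw [MeasureTheory.integral_sub (hint τ hτ)
          (integrableOn_const hvolfin),
          MeasureTheory.setIntegral_const, smul_eq_mul, measureReal_def, hvol]
        field_simp
        ring
      have := h1 τ hτ
      rw [hz, mul_zero, neg_zero] at this
      exact this
    have hconst : (∫ p in s, u Δt p * 1) = Real.exp (-((0:ℝ) * Δt)) * ∫ p in s, u 0 p * 1 := by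
      apply decay_lemma Δt 0 hΔt
      intro τ hτ
      simpa using key τ hτ
    simpa using hconst
  · exact moment _ (continuous_fst.sub continuous_const) hx0 (Set.mem_insert_iff.2 (Or.inr (Set.mem_insert _ _)))
  · exact moment _ (continuous_snd.sub continuous_const) hy0 (Set.mem_insert_iff.2 (Or.inr (Set.mem_insert_iff.2 (Or.inr rfl))))
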